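/- Let k ≥ 1, let ω = (ω₁, ω₂, …) be a sequence of integers, and let n ≥ k+1. Then the weighted isobaric polynomials satisfy the linear recursion P_{ω,k,n} = t₁·P_{ω,k,n−1} + t₂·P_{ω,k,n−2} + ⋯ + t_k·P_{ω,k,n−k} in ℤ[t₁,…,t_k]. -/

import Mathlib

open Finset MvPolynomial

/-- The set of partitions `α ⊢ n` with parts at most `k`, encoded as tuples
`α = (α₁, …, α_k) ∈ ℕ^k` (0-indexed) with `∑ j, (j+1)·α_j = n`. -/
def partitions (k n : ℕ) : Finset (Fin k → ℕ) :=
  (Fintype.piFinset fun _ : Fin k => Finset.range (n + 1)).filter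
    fun α => ∑ j : Fin k, (j.1 + 1) * α j = n

/-- The variable `t_{m+1}` of `ℚ[t₁,…,t_k]` (0-indexed), with the convention
`t_j = 0` for `j > k`. -/
noncomputable def tQ (k m : ℕ) : MvPolynomial (Fin k) ℚ :=
  if h : m < k then X ⟨m, h⟩ else 0

/-- The weighted isobaric polynomial with weight vector `ω` (0-indexed, so
`ω 0 = ω₁`): `P_{ω,k,n} = ∑_{α ⊢ n} (|α|!/(α₁!⋯α_k!))·((∑ᵢ αᵢωᵢ)/|α|)·t^α`.
Its coefficients are integers; it is written here in `ℚ[t₁,…,t_k]`. -/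
noncomputable def P (k : ℕ) (ω : ℕ → ℤ) (n : ℕ) : MvPolynomial (Fin k) ℚ :=
  ∑ α ∈ partitions k n,
    C ((Nat.multinomial Finset.univ α : ℚ) *
        ((∑ i : Fin k, (α i : ℚ) * (ω i.1 : ℚ)) / ((∑ i, α i : ℕ) : ℚ))) *
      ∏ j, X j ^ α j

/-! For `|α| ≥ 2` the coefficient `c(α) = multinomial(α) · (∑ᵢ αᵢωᵢ)/|α|` of `t^α` satisfies
`c(α) = ∑_{j : αⱼ ≠ 0} c(α - eⱼ)`, because `multinomial(α - eⱼ) = multinomial(α) · αⱼ/|α|` and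
`∑ⱼ αⱼ (∑ᵢ αᵢωᵢ - ωⱼ) = (|α| - 1) ∑ᵢ αᵢωᵢ`. (At `|α| = 1` it fails: `c(0) = 0/0 = 0`.)
A partition of `n ≥ k + 1` into parts `≤ k` has at least two parts, and `α ↦ (j, α - eⱼ)` matches
the monomials of `P_n` with those of the products `tⱼ₊₁ · P_{n-j-1}`. -/

lemma sub_single_add_single {ι : Type*} [DecidableEq ι] {α : ι → ℕ} {j : ι} (h : α j ≠ 0) :
    α - Pi.single j 1 + Pi.single j 1 = α := by
  ext i
  rcases eq_or_ne i j with rfl | hij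
  · simp; omega
  · simp [hij]

section

variable {ι : Type*} [Fintype ι] [DecidableEq ι]

lemma sum_mul_add_single (d β : ι → ℕ) (j : ι) :
    ∑ i, d i * (β + Pi.single j 1 : ι → ℕ) i = ∑ i, d i * β i + d j := by
  simp [mul_add, sum_add_distrib, Pi.single_apply]

lemma prod_pow_add_single {M : Type*} [CommMonoid M] (x : ι → M) (β : ι → ℕ) (j : ι) :
    ∏ i, x i ^ (β + Pi.single j 1 : ι → ℕ) i = x j * ∏ i, x i ^ β i := by
  simp only [Pi.add_apply, pow_add, prod_mul_distrib, Pi.single_apply, pow_ite, pow_one,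
    pow_zero, prod_ite_eq', mem_univ, if_true]
  exact mul_comm _ _

lemma Nat.multinomial_add_single_mul (β : ι → ℕ) (j : ι) :
    Nat.multinomial univ (β + Pi.single j 1) * (β j + 1) =
      Nat.multinomial univ β * (∑ i, β i + 1) := by
  have hj : j ∉ univ.erase j := notMem_erase j univ
  have hrest : ∀ i ∈ univ.erase j, (β + Pi.single j 1 : ι → ℕ) i = β i := fun i hi => by
    simp [ne_of_mem_erase hi]
  rw [← insert_erase (mem_univ j), Nat.multinomial_insert hj, Nat.multinomial_insert hj,
    Nat.multinomial_congr hrest, sum_insert hj, sum_congr rfl hrest]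
  simp only [Pi.add_apply, Pi.single_eq_same]
  rw [add_right_comm, mul_right_comm, ← Nat.add_one_mul_choose_eq]
  ring

variable {K : Type*} [Field K] [CharZero K]

noncomputable def isobaricCoeff (w : ι → K) (α : ι → ℕ) : K :=
  (Nat.multinomial univ α : K) * ((∑ i, (α i : K) * w i) / ((∑ i, α i : ℕ) : K))

lemma isobaricCoeff_sub_single (w : ι → K) {α : ι → ℕ} {j : ι} (hj : α j ≠ 0)
    (hα : 2 ≤ ∑ i, α i) :
    isobaricCoeff w (α - Pi.single j 1) =
      (Nat.multinomial univ α : K) * α j * (∑ i, (α i : K) * w i - w j) /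
        ((∑ i, α i : ℕ) * ((∑ i, α i : ℕ) - 1)) := by
  obtain ⟨β, rfl⟩ : ∃ β : ι → ℕ, α = β + Pi.single j 1 := ⟨_, (sub_single_add_single hj).symm⟩
  have hcard : ∑ i, (β + Pi.single j 1 : ι → ℕ) i = ∑ i, β i + 1 := by
    simpa using sum_mul_add_single 1 β j
  have hweight :
      ∑ i, ((β + Pi.single j 1 : ι → ℕ) i : K) * w i = ∑ i, (β i : K) * w i + w j := by
    simp [add_mul, sum_add_distrib, Pi.single_apply]
  have hmult : (Nat.multinomial univ (β + Pi.single j 1) : K) * (β j + 1) =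
      Nat.multinomial univ β * (∑ i, β i + 1 : ℕ) := by
    exact_mod_cast Nat.multinomial_add_single_mul β j
  have hβ : ∑ i, (β i : K) ≠ 0 := by rw [hcard] at hα; exact_mod_cast (by omega : ∑ i, β i ≠ 0)
  have hβ1 : ∑ i, (β i : K) + 1 ≠ 0 := by exact_mod_cast Nat.succ_ne_zero (∑ i, β i)
  rw [add_tsub_cancel_right, isobaricCoeff, hcard, hweight]
  simp only [Pi.add_apply, Pi.single_eq_same, Nat.cast_add, Nat.cast_one, add_sub_cancel_right]
  rw [hmult]
  push_cast
  field_simp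

lemma isobaricCoeff_eq_sum_sub_single (w : ι → K) {α : ι → ℕ} (hα : 2 ≤ ∑ i, α i) :
    isobaricCoeff w α = ∑ j with α j ≠ 0, isobaricCoeff w (α - Pi.single j 1) := by
  rw [sum_congr rfl fun j hj => isobaricCoeff_sub_single w (mem_filter.1 hj).2 hα,
    sum_filter_of_ne fun j _ h => by contrapose! h; simp [h]]
  have hN : (∑ i, (α i : K)) ≠ 0 := by exact_mod_cast (by omega : ∑ i, α i ≠ 0)
  have hN1 : (∑ i, (α i : K)) - 1 ≠ 0 := by
    rw [sub_ne_zero]; exact_mod_cast (by omega : ∑ i, α i ≠ 1)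
  rw [← sum_div, isobaricCoeff]
  simp only [mul_sub, mul_assoc, ← mul_sum, sum_sub_distrib, ← sum_mul]
  push_cast
  field_simp

end

lemma mem_partitions {k n : ℕ} {α : Fin k → ℕ} :
    α ∈ partitions k n ↔ ∑ j : Fin k, (j.1 + 1) * α j = n := by
  refine ⟨fun h => (mem_filter.1 h).2, fun h => mem_filter.2 ⟨?_, h⟩⟩
  refine Fintype.mem_piFinset.2 fun i => mem_range.2 (Nat.lt_succ_of_le ?_)
  calc α i ≤ (i.1 + 1) * α i := Nat.le_mul_of_pos_left _ i.1.succ_pos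
    _ ≤ ∑ j : Fin k, (j.1 + 1) * α j :=
      single_le_sum (f := fun j : Fin k => (j.1 + 1) * α j) (fun j _ => Nat.zero_le _) (mem_univ i)
    _ = n := h

lemma two_le_sum_of_mem_partitions {k n : ℕ} (hn : k + 1 ≤ n) {α : Fin k → ℕ}
    (hα : α ∈ partitions k n) : 2 ≤ ∑ i, α i := by
  have hle : n ≤ k * ∑ i, α i := by
    rw [← mem_partitions.1 hα, mul_sum]
    exact sum_le_sum fun i _ => Nat.mul_le_mul_right _ i.2
  by_contra! h
  have : k * ∑ i, α i ≤ k * 1 := Nat.mul_le_mul_left _ (by omega)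
  omega

lemma sum_partitions_sub_single {M : Type*} [AddCommMonoid M] {k n : ℕ} (j : Fin k)
    (hj : j.1 + 1 ≤ n) (f : (Fin k → ℕ) → (Fin k → ℕ) → M) :
    ∑ α ∈ partitions k n with α j ≠ 0, f (α - Pi.single j 1) α =
      ∑ β ∈ partitions k (n - (j.1 + 1)), f β (β + Pi.single j 1) := by
  have hdeg (β : Fin k → ℕ) := sum_mul_add_single (fun i : Fin k => i.1 + 1) β j
  refine sum_nbij' (· - Pi.single j 1) (· + Pi.single j 1) ?_ ?_ ?_ ?_ ?_
  · intro α hα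
    rw [mem_filter, mem_partitions] at hα
    have := hdeg (α - Pi.single j 1)
    rw [sub_single_add_single hα.2] at this
    rw [mem_partitions]
    omega
  · intro β hβ
    rw [mem_partitions] at hβ
    rw [mem_filter, mem_partitions, hdeg, hβ]
    simp only [Pi.add_apply, Pi.single_eq_same]
    omega
  · intro α hα
    exact sub_single_add_single (mem_filter.1 hα).2
  · intro β _
    exact add_tsub_cancel_right β _
  · intro α hα
    rw [sub_single_add_single (mem_filter.1 hα).2]

lemma sum_Icc_tQ_mul {k : ℕ} (f : ℕ → MvPolynomial (Fin k) ℚ) :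
    ∑ j ∈ Icc 1 k, tQ k (j - 1) * f j = ∑ j : Fin k, X j * f (j.1 + 1) := by
  rw [← Ico_add_one_right_eq_Icc, sum_Ico_eq_sum_range, Nat.add_sub_cancel,
    ← Fin.sum_univ_eq_sum_range]
  refine sum_congr rfl fun j _ => ?_
  simp [tQ, add_comm]

theorem P_linear_recursion_general (k : ℕ) (ω : ℕ → ℤ) (n : ℕ) (hn : k + 1 ≤ n) :
    P k ω n = ∑ j ∈ Finset.Icc 1 k, tQ k (j - 1) * P k ω (n - j) := by
  set w : Fin k → ℚ := fun i => ω i.1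
  calc P k ω n
      = ∑ α ∈ partitions k n, ∑ j with α j ≠ 0,
          C (isobaricCoeff w (α - Pi.single j 1)) * ∏ i, X i ^ α i := by
        refine sum_congr rfl fun α hα => ?_
        rw [← sum_mul, ← map_sum,
          ← isobaricCoeff_eq_sum_sub_single w (two_le_sum_of_mem_partitions hn hα)]
        rfl
    _ = ∑ j : Fin k, ∑ α ∈ partitions k n with α j ≠ 0,
          C (isobaricCoeff w (α - Pi.single j 1)) * ∏ i, X i ^ α i :=
        sum_comm' fun α j => by simp
    _ = ∑ j : Fin k, X j * P k ω (n - (j.1 + 1)) := by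
        refine sum_congr rfl fun j _ => ?_
        rw [sum_partitions_sub_single j (by omega)
          (fun β α => C (isobaricCoeff w β) * ∏ i, X i ^ α i), P, mul_sum]
        refine sum_congr rfl fun β _ => ?_
        rw [prod_pow_add_single]
        exact mul_left_comm _ _ _
    _ = ∑ j ∈ Finset.Icc 1 k, tQ k (j - 1) * P k ω (n - j) :=
        (sum_Icc_tQ_mul fun m => P k ω (n - m)).symm

theorem P_linear_recursion (k : ℕ) (hk : 1 ≤ k) (ω : ℕ → ℤ) (n : ℕ) (hn : k + 1 ≤ n) :
    P k ω n = ∑ j ∈ Finset.Icc 1 k, tQ k (j - 1) * P k ω (n - j) :=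
  P_linear_recursion_general k ω n hn
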